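/- (Discrete-label NWJ bound, intermediate step in the proof of Theorem 3.1) Let U be a random variable taking values in {1,...,M} with probability mass function p(u), and let S be a random variable jointly distributed with U. For any measurable score function f(u,s) (with the relevant expectations finite), I(U;S) >= E_{p(U,S)}[f(U,S)] - e^{-1} * sum_{v=1}^M p(v) * E_{p(S)}[e^{f(v,S)}], where E_{p(S)} is expectation under the marginal distribution of S. -/

import Mathlib

open MeasureTheory ProbabilityTheory ENNReal

/-- Mutual information of a joint distribution `μ` on `α × β`:
`I(x;y) = E_{p(x,y)}[log (p(x,y) / (p(x) p(y)))]`. -/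
noncomputable def mutualInfo {α β : Type*} [MeasurableSpace α] [MeasurableSpace β]
    (μ : Measure (α × β)) : ℝ :=
  ∫ p, Real.log ((μ.rnDeriv (μ.fst.prod μ.snd)) p).toReal ∂μ

/-- Young-type pointwise inequality: `t * a ≤ t * log t + exp (a - 1)` for `t ≥ 0`. -/
private lemma key_ineq (t a : ℝ) (ht : 0 ≤ t) :
    t * a ≤ t * Real.log t + Real.exp (a - 1) := by
  rcases ht.eq_or_lt with h | h
  · rw [← h]
    simp only [zero_mul, zero_add]
    positivity
  · have h1 := Real.add_one_le_exp (a - 1 - Real.log t)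
    have h2 : Real.exp (a - 1 - Real.log t) = Real.exp (a - 1) / t := by
      rw [Real.exp_sub, Real.exp_log h]
    rw [h2] at h1
    have h3 : (a - Real.log t) * t ≤ Real.exp (a - 1) := by
      rw [← le_div_iff₀ h]
      linarith
    nlinarith [h3]

/-- Bound on `|t * log t|` for `t ∈ [0, C]` with `C ≥ 1`. -/
private lemma abs_mul_log_le {C t : ℝ} (hC : 1 ≤ C) (ht : 0 ≤ t) (htC : t ≤ C) :
    |t * Real.log t| ≤ 1 + C * Real.log C := by
  have hlogC : 0 ≤ Real.log C := Real.log_nonneg hC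
  have hC0 : 0 ≤ C := by linarith
  rcases le_or_gt t 1 with h1 | h1
  · rcases ht.eq_or_lt with h0 | h0
    · rw [← h0]; simp; positivity
    · have hlt := (Real.abs_log_mul_self_lt t h0 h1).le
      calc |t * Real.log t| = |Real.log t * t| := by rw [mul_comm]
        _ ≤ 1 := hlt
        _ ≤ 1 + C * Real.log C := by nlinarith
  · have hlt : 0 ≤ Real.log t := Real.log_nonneg h1.le
    rw [abs_of_nonneg (by positivity)]
    have hlog : Real.log t ≤ Real.log C := Real.log_le_log (by linarith) htC
    nlinarith

/-- Decomposition of a measure on `Fin M × β` as a finite sum over vertical slices. -/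
private lemma measure_eq_sum_slices {M : ℕ} {β : Type*} [MeasurableSpace β]
    (μ : Measure (Fin M × β)) {E : Set (Fin M × β)} (hE : MeasurableSet E) :
    μ E = ∑ v : Fin M, μ ({v} ×ˢ (Prod.mk v ⁻¹' E)) := by
  have hdec : E = ⋃ v : Fin M, ({v} ×ˢ (Prod.mk v ⁻¹' E)) := by
    ext ⟨a, b⟩
    constructor
    · intro h
      exact Set.mem_iUnion.2 ⟨a, ⟨rfl, h⟩⟩
    · intro h
      obtain ⟨v, hva, hvb⟩ := Set.mem_iUnion.1 h
      rw [Set.mem_singleton_iff] at hva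
      subst hva
      exact hvb
  have hdisj : Pairwise (Function.onFun Disjoint
      fun v : Fin M => ({v} ×ˢ (Prod.mk v ⁻¹' E))) := by
    intro v w hvw
    refine Set.disjoint_left.2 ?_
    rintro ⟨a, b⟩ ⟨ha, -⟩ ⟨ha', -⟩
    rw [Set.mem_singleton_iff] at ha ha'
    exact hvw (ha ▸ ha')
  have hmeas : ∀ v : Fin M, MeasurableSet ({v} ×ˢ (Prod.mk v ⁻¹' E)) := fun v =>
    (measurableSet_singleton v).prod (measurable_prodMk_left hE)
  conv_lhs => rw [hdec]
  rw [measure_iUnion hdisj hmeas, tsum_fintype]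

/-- **Discrete-label NWJ bound** (intermediate step in the proof of Theorem 3.1): let `U` be a
random variable taking values in `{1, …, M}` (modeled as `Fin M`, with probability mass function
`v ↦ μ.fst {v}`), jointly distributed with `S` according to the joint distribution `μ`. For any
measurable score function `f(u, s)` (with the relevant expectations finite),
`I(U;S) ≥ E_{p(U,S)}[f(U,S)] - e⁻¹ ∑_{v=1}^M p(v) E_{p(S)}[e^{f(v,S)}]`,
where `E_{p(S)}` is the expectation under the marginal `μ.snd` of `S`. -/
theorem discrete_nwj_lower_bound {M : ℕ} {β : Type*} [MeasurableSpace β]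
    (μ : Measure (Fin M × β)) [IsProbabilityMeasure μ]
    (f : Fin M → β → ℝ) (hf : ∀ v, Measurable (f v))
    (hInt₁ : Integrable (fun p => f p.1 p.2) μ)
    (hInt₂ : ∀ v, Integrable (fun s => Real.exp (f v s)) μ.snd) :
    mutualInfo μ ≥
      (∫ p, f p.1 p.2 ∂μ) -
        (Real.exp 1)⁻¹ * ∑ v : Fin M, (μ.fst {v}).toReal * ∫ s, Real.exp (f v s) ∂μ.snd := by
  set ν := μ.fst.prod μ.snd with hνdef
  -- slice measure bounds
  have hle_fst : ∀ (v : Fin M) (A : Set β), μ ({v} ×ˢ A) ≤ μ.fst {v} := by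
    intro v A
    rw [Measure.fst_apply (measurableSet_singleton v)]
    exact measure_mono fun x hx => hx.1
  have hle_snd : ∀ (v : Fin M) {A : Set β}, MeasurableSet A → μ ({v} ×ˢ A) ≤ μ.snd A := by
    intro v A hA
    rw [Measure.snd_apply hA]
    exact measure_mono fun x hx => hx.2
  -- nonemptiness
  haveI hne : Nonempty (Fin M) := by
    by_contra h
    haveI : IsEmpty (Fin M) := not_nonempty_iff.mp h
    have h0 : (Set.univ : Set (Fin M × β)) = ∅ := Set.univ_eq_empty_iff.mpr inferInstance
    have := measure_univ (μ := μ)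
    rw [h0] at this
    simp at this
  -- minimal nonzero mass
  set pmin : ℝ≥0∞ := Finset.univ.inf' (Finset.univ_nonempty) fun v : Fin M =>
    if μ.fst {v} = 0 then 1 else μ.fst {v} with hpmin_def
  have hpmin_pos : 0 < pmin := by
    rw [hpmin_def, Finset.lt_inf'_iff]
    intro v _
    split_ifs with h
    · exact zero_lt_one
    · exact pos_iff_ne_zero.mpr h
  have hpmin_le_one : pmin ≤ 1 := by
    obtain ⟨v⟩ := hne
    refine le_trans (Finset.inf'_le _ (Finset.mem_univ v)) ?_
    split_ifs with h
    · exact le_rfl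
    · exact prob_le_one
  have hpmin_ne_top : pmin ≠ ⊤ := (hpmin_le_one.trans_lt ENNReal.one_lt_top).ne
  have hpmin_le : ∀ v : Fin M, μ.fst {v} ≠ 0 → pmin ≤ μ.fst {v} := by
    intro v h
    refine le_trans (Finset.inf'_le _ (Finset.mem_univ v)) ?_
    rw [if_neg h]
  set c : ℝ≥0∞ := pmin⁻¹ with hc_def
  have hc0 : c ≠ 0 := ENNReal.inv_ne_zero.mpr hpmin_ne_top
  have hcT : c ≠ ⊤ := ENNReal.inv_ne_top.mpr hpmin_pos.ne'
  -- absolute continuity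
  have hac : μ ≪ ν := by
    refine Measure.AbsolutelyContinuous.mk fun E hE hE0 => ?_
    rw [measure_eq_sum_slices μ hE]
    refine Finset.sum_eq_zero fun v _ => ?_
    have hA : MeasurableSet (Prod.mk v ⁻¹' E) := measurable_prodMk_left hE
    have hsub : ({v} ×ˢ (Prod.mk v ⁻¹' E)) ⊆ E := by
      rintro ⟨a, b⟩ ⟨ha, hb⟩
      rw [Set.mem_singleton_iff] at ha
      subst ha
      exact hb
    have hνA : ν ({v} ×ˢ (Prod.mk v ⁻¹' E)) = 0 :=
      le_antisymm (hE0 ▸ measure_mono hsub) zero_le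
    rw [Measure.prod_prod] at hνA
    rcases mul_eq_zero.mp hνA with h | h
    · exact le_antisymm ((hle_fst v _).trans h.le) zero_le
    · exact le_antisymm ((hle_snd v hA).trans h.le) zero_le
  -- domination μ ≤ c • ν
  have hμle : μ ≤ c • ν := by
    refine Measure.le_iff.2 fun E hE => ?_
    rw [measure_eq_sum_slices μ hE]
    have hν : (c • ν) E = ∑ v : Fin M, c * (μ.fst {v} * μ.snd (Prod.mk v ⁻¹' E)) := by
      rw [Measure.smul_apply, measure_eq_sum_slices ν hE, smul_eq_mul, Finset.mul_sum]
      refine Finset.sum_congr rfl fun v _ => ?_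
      rw [Measure.prod_prod]
    rw [hν]
    refine Finset.sum_le_sum fun v _ => ?_
    have hA : MeasurableSet (Prod.mk v ⁻¹' E) := measurable_prodMk_left hE
    by_cases h0 : μ.fst {v} = 0
    · refine le_trans ((hle_fst v _).trans h0.le) zero_le
    · have h1c : 1 ≤ c * μ.fst {v} := by
        calc (1 : ℝ≥0∞) = c * pmin := (ENNReal.inv_mul_cancel hpmin_pos.ne' hpmin_ne_top).symm
          _ ≤ c * μ.fst {v} := mul_le_mul_right (hpmin_le v h0) c
      calc μ ({v} ×ˢ (Prod.mk v ⁻¹' E)) ≤ μ.snd (Prod.mk v ⁻¹' E) := hle_snd v hA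
        _ = 1 * μ.snd (Prod.mk v ⁻¹' E) := (one_mul _).symm
        _ ≤ (c * μ.fst {v}) * μ.snd (Prod.mk v ⁻¹' E) := mul_le_mul_left h1c _
        _ = c * (μ.fst {v} * μ.snd (Prod.mk v ⁻¹' E)) := mul_assoc _ _ _
  -- a.e. bound on the Radon-Nikodym derivative
  haveI : IsFiniteMeasure (c • ν) := by
    constructor
    rw [Measure.smul_apply, smul_eq_mul]
    exact ENNReal.mul_lt_top hcT.lt_top (measure_lt_top ν _)
  have hrb : μ.rnDeriv ν ≤ᵐ[ν] fun _ => c := by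
    have h1 : μ.rnDeriv (c • ν) ≤ᵐ[c • ν] 1 := Measure.rnDeriv_le_one_of_le hμle
    rw [Measure.ae_ennreal_smul_measure_eq hc0] at h1
    have h2 : μ.rnDeriv (c • ν) =ᵐ[ν] c⁻¹ • μ.rnDeriv ν :=
      Measure.rnDeriv_smul_right_of_ne_top μ ν hc0 hcT
    filter_upwards [h1, h2] with x hx1 hx2
    rw [hx2] at hx1
    simp only [Pi.smul_apply, smul_eq_mul, Pi.one_apply] at hx1
    calc μ.rnDeriv ν x = c * (c⁻¹ * μ.rnDeriv ν x) := by
          rw [← mul_assoc, ENNReal.mul_inv_cancel hc0 hcT, one_mul]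
      _ ≤ c * 1 := mul_le_mul_right hx1 c
      _ = c := mul_one c
  set ρ : Fin M × β → ℝ := fun x => (μ.rnDeriv ν x).toReal with hρ_def
  have hρ_meas : Measurable ρ := (Measure.measurable_rnDeriv μ ν).ennreal_toReal
  have hρ_nonneg : ∀ x, 0 ≤ ρ x := fun x => ENNReal.toReal_nonneg
  have hρ_bound : ∀ᵐ x ∂ν, ρ x ≤ c.toReal := by
    filter_upwards [hrb] with x hx
    exact ENNReal.toReal_mono hcT hx
  have hC1 : 1 ≤ c.toReal := by
    have h1 : (1 : ℝ≥0∞) ≤ c := ENNReal.one_le_inv.mpr hpmin_le_one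
    simpa using ENNReal.toReal_mono hcT h1
  -- integrability of ρ log ρ
  set g : Fin M × β → ℝ := fun x => ρ x * Real.log (ρ x) with hg_def
  have hg_int : Integrable g ν := by
    refine Integrable.mono' (integrable_const (1 + c.toReal * Real.log c.toReal))
      ((hρ_meas.mul (Real.measurable_log.comp hρ_meas)).aestronglyMeasurable) ?_
    filter_upwards [hρ_bound] with x hx
    rw [Real.norm_eq_abs]
    exact abs_mul_log_le hC1 (hρ_nonneg x) hx
  -- mutual information as an integral over ν
  have hMI : mutualInfo μ = ∫ x, g x ∂ν := by
    simp only [mutualInfo, hg_def, hρ_def, ← hνdef]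
    rw [← integral_rnDeriv_smul hac (f := fun x => Real.log ((μ.rnDeriv ν x).toReal))]
    simp only [smul_eq_mul]
  -- measurability and integrability of exp(f)
  set F : Fin M × β → ℝ := fun x => f x.1 x.2 with hF_def
  have hF_meas : Measurable F := by
    have h : Measurable fun y : β × Fin M => f y.2 y.1 :=
      measurable_from_prod_countable_left fun v => hf v
    exact h.comp measurable_swap
  have hexpF_int : Integrable (fun x => Real.exp (F x)) ν := by
    rw [hνdef, integrable_prod_iff hF_meas.exp.aestronglyMeasurable]
    exact ⟨Filter.Eventually.of_forall fun v => hInt₂ v, Integrable.of_finite⟩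
  -- the sum equals an integral over ν
  have hsum : ∫ x, Real.exp (F x) ∂ν
      = ∑ v : Fin M, (μ.fst {v}).toReal * ∫ s, Real.exp (f v s) ∂μ.snd := by
    rw [hνdef, MeasureTheory.integral_prod _ (hνdef ▸ hexpF_int),
      integral_fintype Integrable.of_finite]
    simp [smul_eq_mul, Measure.real]
    rfl
  -- change of measure for the first integral
  have hμF : ∫ x, F x ∂μ = ∫ x, ρ x * F x ∂ν := by
    rw [← integral_rnDeriv_smul hac (f := F)]
    simp only [smul_eq_mul]
    rfl
  have hLHS_int : Integrable (fun x => ρ x * F x) ν := by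
    have h := (integrable_rnDeriv_smul_iff hac (f := F)).mpr hInt₁
    simpa [smul_eq_mul] using h
  have hRHS_int : Integrable (fun x => g x + Real.exp (F x - 1)) ν := by
    refine hg_int.add ?_
    simp_rw [Real.exp_sub]
    exact hexpF_int.div_const _
  have hmono : ∫ x, ρ x * F x ∂ν ≤ ∫ x, (g x + Real.exp (F x - 1)) ∂ν :=
    integral_mono hLHS_int hRHS_int fun x => key_ineq (ρ x) (F x) (hρ_nonneg x)
  rw [integral_add hg_int (by simpa [Real.exp_sub] using hexpF_int.div_const (Real.exp 1))]
    at hmono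
  have hexp1 : ∫ x, Real.exp (F x - 1) ∂ν = (Real.exp 1)⁻¹ * ∫ x, Real.exp (F x) ∂ν := by
    simp_rw [Real.exp_sub]
    rw [integral_div, div_eq_mul_inv, mul_comm]
  rw [hexp1] at hmono
  rw [ge_iff_le, ← hsum, hMI]
  have : (∫ p, f p.1 p.2 ∂μ) = ∫ x, F x ∂μ := rfl
  rw [this, hμF]
  linarith
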